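/- arXiv:2508.15602 — 2 statements merged into one kernel-verified Lean document; each statement's English description precedes it below -/
import Mathlib

section
/- Let G be a matching-covered graph and let δ(X), δ(Y) be odd cuts with X ⊂ Y ⊂ V. If δ(Y) is a separating cut of G and δ(X) is a separating cut of G/Ȳ, then δ(X) is a separating cut of G. -/
open Classical Finset

noncomputable section

namespace PaperPM

variable {V : Type} [Fintype V] [DecidableEq V]

/-- `M` is (the edge set of) a perfect matching of `G`. -/
def IsPM (G : SimpleGraph V) (M : Finset (Sym2 V)) : Prop :=
  (M : Set (Sym2 V)) ⊆ G.edgeSet ∧ ∀ v : V, ∃! e, e ∈ M ∧ v ∈ e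

/-- `G` is matching-covered: every edge lies in a perfect matching. -/
def MatchingCovered (G : SimpleGraph V) : Prop :=
  ∀ e ∈ G.edgeSet, ∃ M, IsPM G M ∧ e ∈ M

/-- incidence (indicator) vector of a set of edges -/
def indVec (M : Finset (Sym2 V)) : Sym2 V → ℝ := fun e => if e ∈ M then 1 else 0

/-- the perfect matching polytope of `G` -/
def pmPolytope (G : SimpleGraph V) : Set (Sym2 V → ℝ) :=
  convexHull ℝ {x | ∃ M, IsPM G M ∧ x = indVec M}

/-- the cut `δ(X)`: edges of `G` with exactly one endpoint in `X` -/
def cutE (G : SimpleGraph V) (X : Set V) : Finset (Sym2 V) :=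
  Finset.univ.filter fun e =>
    e ∈ G.edgeSet ∧ ∃ u v : V, e = s(u, v) ∧ u ∈ X ∧ v ∉ X

/-- `x(A) = Σ_{a ∈ A} x_a` -/
def edgeSum (x : Sym2 V → ℝ) (A : Finset (Sym2 V)) : ℝ := ∑ e ∈ A, x e

/-- the face `P(G;C) = P(G) ∩ {x : x(δ(X)) = 1}` -/
def faceCut (G : SimpleGraph V) (X : Set V) : Set (Sym2 V → ℝ) :=
  {x ∈ pmPolytope G | edgeSum x (cutE G X) = 1}

/-- `δ(X)` is a tight cut -/
def TightCut (G : SimpleGraph V) (X : Set V) : Prop :=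
  Odd X.toFinset.card ∧ 1 < X.toFinset.card ∧ X.toFinset.card < Fintype.card V - 1 ∧
    ∀ M, IsPM G M → (M ∩ cutE G X).card = 1

/-- a brick: non-bipartite matching-covered graph without tight cuts -/
def IsBrick (G : SimpleGraph V) : Prop :=
  MatchingCovered G ∧ ¬ G.Colorable 2 ∧ ∀ X : Set V, ¬ TightCut G X

/-- dimension of a subset of `ℝ^{Sym2 V}` (affine dimension; `-1` for the empty set) -/
def polyDim (s : Set (Sym2 V → ℝ)) : ℤ :=
  if s = ∅ then -1 else (Module.finrank ℝ (vectorSpan ℝ s) : ℤ)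

/-- number of bricks in a tight cut decomposition of `G`, via the dimension
formula `dim P(G) = |E| − |V| + 1 − b(G)` of Naddef and Edmonds–Pulleyblank–Lovász. -/
def brickCount (G : SimpleGraph V) : ℤ :=
  (G.edgeFinset.card : ℤ) - Fintype.card V + 1 - polyDim (pmPolytope G)

/-- (the edge set of) a perfect matching of the contraction `G/X`, viewed inside `G`:
no edge inside `X`, exactly one cut edge (covering the contraction vertex), and every
vertex outside `X` covered exactly once. This keeps multiple parallel cut edges distinct. -/
def IsPMContr (G : SimpleGraph V) (X : Set V) (M : Finset (Sym2 V)) : Prop :=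
  (M : Set (Sym2 V)) ⊆ G.edgeSet ∧ (∀ e ∈ M, ¬ ∀ v ∈ e, v ∈ X) ∧
    (M ∩ cutE G X).card = 1 ∧ ∀ v : V, v ∉ X → ∃! e, e ∈ M ∧ v ∈ e

/-- the contraction `G/X` is matching-covered (every one of its edges, i.e. every
edge of `G` not inside `X`, lies in a perfect matching of `G/X`). -/
def MatchingCoveredContr (G : SimpleGraph V) (X : Set V) : Prop :=
  ∀ e ∈ G.edgeSet, (¬ ∀ v ∈ e, v ∈ X) → ∃ M, IsPMContr G X M ∧ e ∈ M

/-- `δ(X)` is a separating cut: odd, nontrivial, and both cut-contractions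
`G/X` and `G/X̄` are matching-covered. -/
def SeparatingCut (G : SimpleGraph V) (X : Set V) : Prop :=
  Odd X.toFinset.card ∧ 1 < X.toFinset.card ∧ X.toFinset.card < Fintype.card V - 1 ∧
    MatchingCoveredContr G X ∧ MatchingCoveredContr G Xᶜ

/-- the edges of the contraction `G/X`, as edges of `G` -/
def contrEdges (G : SimpleGraph V) (X : Set V) : Finset (Sym2 V) :=
  G.edgeFinset.filter fun e => ¬ ∀ v ∈ e, v ∈ X

/-- the perfect matching polytope of the contraction `G/X`, in the coordinates of `G` -/
def contrPolytope (G : SimpleGraph V) (X : Set V) : Set (Sym2 V → ℝ) :=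
  convexHull ℝ {x | ∃ M, IsPMContr G X M ∧ x = indVec M}

/-- number of bricks of the contraction `G/X`, via the dimension formula -/
def brickCountContr (G : SimpleGraph V) (X : Set V) : ℤ :=
  (contrEdges G X).card - ((Fintype.card V - X.toFinset.card : ℕ) + 1) + 1 -
    polyDim (contrPolytope G X)

/-- the contraction `G/X` is a Birkhoff–von Neumann graph: its perfect matching
polytope is cut out by nonnegativity, the degree equations, and `x(δ(X)) = 1`. -/
def BvNContr (G : SimpleGraph V) (X : Set V) : Prop :=
  contrPolytope G X =
    {x | (∀ e, 0 ≤ x e) ∧ (∀ e : Sym2 V, (e ∉ G.edgeSet ∨ ∀ v ∈ e, v ∈ X) → x e = 0) ∧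
      (∀ v : V, v ∉ X → edgeSum x (cutE G {v}) = 1) ∧ edgeSum x (cutE G X) = 1}

/-- the contraction `G/X` is bipartite -/
def ContrBipartite (G : SimpleGraph V) (X : Set V) : Prop :=
  ∃ (c : V → Bool) (b : Bool), ∀ u v : V, G.Adj u v → (u ∉ X ∨ v ∉ X) →
    (if u ∈ X then b else c u) ≠ (if v ∈ X then b else c v)

/-- `G` is a Birkhoff–von Neumann graph -/
def BvN (G : SimpleGraph V) : Prop :=
  pmPolytope G =
    {x | (∀ e, 0 ≤ x e) ∧ (∀ e : Sym2 V, e ∉ G.edgeSet → x e = 0) ∧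
      ∀ v : V, edgeSum x (cutE G {v}) = 1}

/-- `F` is a face of the convex set `P` -/
def IsFaceOf {E : Type*} [AddCommGroup E] [Module ℝ E] (P F : Set E) : Prop :=
  F ⊆ P ∧ Convex ℝ F ∧ ∀ x ∈ P, ∀ y ∈ P, ∀ t : ℝ, 0 < t → t < 1 →
    t • x + (1 - t) • y ∈ F → x ∈ F ∧ y ∈ F

/-- a vector is integral if all its coordinates are integers -/
def Integral (x : Sym2 V → ℝ) : Prop := ∀ e, ∃ n : ℤ, x e = (n : ℝ)

/-- the Petersen graph, as the Kneser graph `K(5,2)` -/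
def petersenGraph : SimpleGraph {s : Finset (Fin 5) // s.card = 2} where
  Adj a b := Disjoint (a : Finset (Fin 5)) (b : Finset (Fin 5))
  symm := ⟨fun _ _ h => h.symm⟩
  loopless := ⟨fun a h => by
    have h0 : (a : Finset (Fin 5)) = ∅ := by
      simpa [Finset.bot_eq_empty] using disjoint_self.mp h
    have h2 := a.2
    rw [h0] at h2
    simp at h2⟩


/-- a perfect matching of the double contraction of `G` along the two disjoint sets
`X` and `Z` (each contracted to a single vertex), viewed inside `G` -/
def IsPMContr2 (G : SimpleGraph V) (X Z : Set V) (M : Finset (Sym2 V)) : Prop :=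
  (M : Set (Sym2 V)) ⊆ G.edgeSet ∧ (∀ e ∈ M, ¬ ∀ v ∈ e, v ∈ X) ∧
    (∀ e ∈ M, ¬ ∀ v ∈ e, v ∈ Z) ∧
    (M ∩ cutE G X).card = 1 ∧ (M ∩ cutE G Z).card = 1 ∧
    ∀ v : V, v ∉ X → v ∉ Z → ∃! e, e ∈ M ∧ v ∈ e

/-- the double contraction of `G` along `X` and `Z` is matching-covered -/
def MatchingCoveredContr2 (G : SimpleGraph V) (X Z : Set V) : Prop :=
  ∀ e ∈ G.edgeSet, (¬ ∀ v ∈ e, v ∈ X) → (¬ ∀ v ∈ e, v ∈ Z) →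
    ∃ M, IsPMContr2 G X Z M ∧ e ∈ M

/-! Given an edge `e` of `G/X`, take a perfect matching containing `e` of whichever of
`(G/Ȳ)/X` and `G/Y` contains `e`. It uses exactly one edge `f` of `δ(Y)`; take a perfect
matching of the other contraction through `f`. The two agree on `δ(Y)`, so their union
is a perfect matching of `G/X`: inside `Y` the first one covers every vertex outside `X`,
outside `Y` the second one does, and the only edge they could both cover a vertex with is `f`. -/

lemma mem_cutE_iff {G : SimpleGraph V} {Y : Set V} {e : Sym2 V} :
    e ∈ cutE G Y ↔ e ∈ G.edgeSet ∧ (∃ v ∈ e, v ∈ Y) ∧ ¬ ∀ v ∈ e, v ∈ Y := by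
  induction e using Sym2.ind with
  | _ a b =>
    simp only [cutE, Finset.mem_filter, Finset.mem_univ, true_and, Sym2.eq_iff,
      Sym2.mem_iff, forall_eq_or_imp, forall_eq, exists_eq_or_imp, exists_eq_left]
    constructor
    · rintro ⟨hE, u, v, (⟨rfl, rfl⟩ | ⟨rfl, rfl⟩), hu, hv⟩ <;> tauto
    · rintro ⟨hE, hin, hout⟩
      refine ⟨hE, ?_⟩
      by_cases ha : a ∈ Y
      · exact ⟨a, b, .inl ⟨rfl, rfl⟩, ha, fun hb => hout ⟨ha, hb⟩⟩
      · exact ⟨b, a, .inr ⟨rfl, rfl⟩, hin.resolve_left ha, ha⟩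

lemma cutE_compl (G : SimpleGraph V) (Y : Set V) : cutE G Yᶜ = cutE G Y := by
  ext e
  simp only [mem_cutE_iff, Set.mem_compl_iff, not_forall, not_not]
  constructor <;>
    exact fun ⟨hE, ⟨u, hu, huY⟩, v, hv, hvY⟩ => ⟨hE, ⟨v, hv, hvY⟩, u, hu, huY⟩

lemma existsUnique_mem_union_left {α : Type*} [DecidableEq α] {A B : Finset α}
    {p : α → Prop} (hA : ∃! e, e ∈ A ∧ p e) (hB : ∀ e ∈ B, p e → e ∈ A) :
    ∃! e, e ∈ A ∪ B ∧ p e := by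
  obtain ⟨e, ⟨heA, he⟩, huniq⟩ := hA
  refine ⟨e, ⟨Finset.mem_union_left _ heA, he⟩, ?_⟩
  rintro e' ⟨he', hpe'⟩
  exact huniq e' ⟨(Finset.mem_union.mp he').elim id (hB e' · hpe'), hpe'⟩

lemma eq_singleton_of_card_eq_one_of_mem {α : Type*} {s : Finset α} {a : α}
    (hs : s.card = 1) (ha : a ∈ s) : s = {a} :=
  Finset.eq_singleton_iff_unique_mem.mpr
    ⟨ha, fun x hx => Finset.card_le_one.mp hs.le x hx a ha⟩

lemma not_forall_mem_of_mem_cutE {G : SimpleGraph V} {Y : Set V} {f : Sym2 V}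
    (hf : f ∈ cutE G Y) : ¬ ∀ v ∈ f, v ∈ Y :=
  (mem_cutE_iff.mp hf).2.2

lemma isPMContr_union {G : SimpleGraph V} {X Y : Set V} (hXY : X ⊆ Y)
    {M₁ M₂ : Finset (Sym2 V)} {f : Sym2 V} (h₁ : IsPMContr2 G X Yᶜ M₁) (h₂ : IsPMContr G Y M₂)
    (hf : f ∈ cutE G Y) (hf₁ : f ∈ M₁) (hf₂ : f ∈ M₂) :
    IsPMContr G X (M₁ ∪ M₂) := by
  obtain ⟨hE₁, hX₁, hYc₁, hcutX₁, hcutY₁, hcov₁⟩ := h₁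
  obtain ⟨hE₂, hY₂, hcutY₂, hcov₂⟩ := h₂
  rw [cutE_compl] at hcutY₁
  have hcut₁ := eq_singleton_of_card_eq_one_of_mem hcutY₁ (Finset.mem_inter.mpr ⟨hf₁, hf⟩)
  have hcut₂ := eq_singleton_of_card_eq_one_of_mem hcutY₂ (Finset.mem_inter.mpr ⟨hf₂, hf⟩)
  have hinside : ∀ e ∈ M₂, ∀ v ∈ e, v ∈ Y → e = f := fun e he v hv hvY => by
    have : e ∈ M₂ ∩ cutE G Y :=
      Finset.mem_inter.mpr ⟨he, mem_cutE_iff.mpr ⟨hE₂ he, ⟨v, hv, hvY⟩, hY₂ e he⟩⟩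
    simpa [hcut₂] using this
  have houtside : ∀ e ∈ M₁, ∀ v ∈ e, v ∉ Y → e = f := fun e he v hv hvY => by
    have : e ∈ M₁ ∩ cutE G Y := Finset.mem_inter.mpr
      ⟨he, cutE_compl G Y ▸ mem_cutE_iff.mpr ⟨hE₁ he, ⟨v, hv, hvY⟩, hYc₁ e he⟩⟩
    simpa [hcut₁] using this
  refine ⟨?_, ?_, ?_, fun v hvX => ?_⟩
  · rw [Finset.coe_union]
    exact Set.union_subset hE₁ hE₂
  · rintro e he hallX
    rcases Finset.mem_union.mp he with he | he
    · exact hX₁ e he hallX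
    · exact hY₂ e he fun v hv => hXY (hallX v hv)
  · suffices M₂ ∩ cutE G X ⊆ M₁ ∩ cutE G X by
      rwa [Finset.union_inter_distrib_right, Finset.union_eq_left.mpr this]
    intro e he
    obtain ⟨he₂, hcut⟩ := Finset.mem_inter.mp he
    obtain ⟨-, ⟨v, hv, hvX⟩, -⟩ := mem_cutE_iff.mp hcut
    exact Finset.mem_inter.mpr ⟨hinside e he₂ v hv (hXY hvX) ▸ hf₁, hcut⟩
  · by_cases hvY : v ∈ Y
    · exact existsUnique_mem_union_left (hcov₁ v hvX (not_not.mpr hvY))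
        fun e he hve => hinside e he v hve hvY ▸ hf₁
    · rw [Finset.union_comm]
      exact existsUnique_mem_union_left (hcov₂ v hvY)
        fun e he hve => houtside e he v hve hvY ▸ hf₂

theorem stmt4_general (G : SimpleGraph V) (X Y : Set V)
    (hXY : X ⊂ Y)
    (hY : SeparatingCut G Y)
    (hXodd : Odd X.toFinset.card) (hX1 : 1 < X.toFinset.card)
    (hX2 : X.toFinset.card < Y.toFinset.card)
    (hXcontr1 : MatchingCoveredContr2 G X Yᶜ)
    (hXcontr2 : MatchingCoveredContr G Xᶜ) :
    SeparatingCut G X := by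
  obtain ⟨-, -, hY2, hYcontr, -⟩ := hY
  refine ⟨hXodd, hX1, hX2.trans hY2, fun e he heX => ?_, hXcontr2⟩
  by_cases heYc : ∀ v ∈ e, v ∈ Yᶜ
  · have heY : ¬ ∀ v ∈ e, v ∈ Y := fun h => heYc _ e.out_fst_mem (h _ e.out_fst_mem)
    obtain ⟨M₂, hM₂, heM₂⟩ := hYcontr e he heY
    obtain ⟨f, hf⟩ := Finset.card_pos.mp (hM₂.2.2.1 ▸ one_pos)
    obtain ⟨hfM₂, hf⟩ := Finset.mem_inter.mp hf
    have hfX : ¬ ∀ v ∈ f, v ∈ X := fun h =>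
      not_forall_mem_of_mem_cutE hf fun v hv => hXY.1 (h v hv)
    obtain ⟨M₁, hM₁, hfM₁⟩ := hXcontr1 f (mem_cutE_iff.mp hf).1 hfX
      (not_forall_mem_of_mem_cutE (cutE_compl G Y ▸ hf))
    exact ⟨_, isPMContr_union hXY.1 hM₁ hM₂ hf hfM₁ hfM₂, Finset.mem_union_right _ heM₂⟩
  · obtain ⟨M₁, hM₁, heM₁⟩ := hXcontr1 e he heX heYc
    obtain ⟨f, hf⟩ := Finset.card_pos.mp (hM₁.2.2.2.2.1 ▸ one_pos)
    obtain ⟨hfM₁, hf⟩ := Finset.mem_inter.mp (cutE_compl G Y ▸ hf)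
    obtain ⟨M₂, hM₂, hfM₂⟩ := hYcontr f (mem_cutE_iff.mp hf).1 (not_forall_mem_of_mem_cutE hf)
    exact ⟨_, isPMContr_union hXY.1 hM₁ hM₂ hf hfM₁ hfM₂, Finset.mem_union_left _ heM₁⟩

/-- if `X ⊂ Y ⊂ V` are odd sets, `δ(Y)` is a separating cut of `G` and
`δ(X)` is a separating cut of `G/Ȳ`, then `δ(X)` is a separating cut of `G`.
(`δ(X)` separating in `G/Ȳ` means: `X` is odd and nontrivial in `G/Ȳ`, and both
cut-contractions `(G/Ȳ)/X` and `(G/Ȳ)/X̄ = G/X̄` are matching-covered.) -/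
theorem stmt4 (G : SimpleGraph V) (hG : MatchingCovered G) (X Y : Set V)
    (hXY : X ⊂ Y) (hYV : Y ⊂ Set.univ)
    (hY : SeparatingCut G Y)
    (hXodd : Odd X.toFinset.card) (hX1 : 1 < X.toFinset.card)
    (hX2 : X.toFinset.card < Y.toFinset.card)
    (hXcontr1 : MatchingCoveredContr2 G X Yᶜ)
    (hXcontr2 : MatchingCoveredContr G Xᶜ) :
    SeparatingCut G X :=
  stmt4_general G X Y hXY hY hXodd hX1 hX2 hXcontr1 hXcontr2

end PaperPM
end
end

section
/- Let G be a matching-covered graph with separating cuts C₁ = δ(X₁), C₂ = δ(X₂) such that X₁, X₂ cross, |X₁∩X₂| is odd, and the face F = P(G;C₁) ∩ P(G;C₂) is not contained in {x : x_e = 0} for any edge e. Then no edge of G joins X₁∖X₂ to X₂∖X₁. -/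
open Classical Finset

noncomputable section

/-!
Suppose `uv` joins `X₁ ∖ X₂` to `X₂ ∖ X₁`, and take `x` in both faces with `x_{uv} ≠ 0`.
Every perfect matching meets an odd cut at least once, so every perfect matching in the
support of `x` meets `C₁` and `C₂` exactly once, and one of them, `M`, contains `uv`.
Then `uv` is the only edge of `M` in `C₁ ∪ C₂`. But `δ(X₁ ∩ X₂) ⊆ C₁ ∪ C₂` and `M` has an
edge leaving the odd set `X₁ ∩ X₂`, which is not `uv` since neither end of `uv` lies in it.
-/

theorem mem_convexHull_setOf_apply_eq {E : Type*} [AddCommGroup E] [Module ℝ E] {s : Set E}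
    {x : E} {c : ℝ} (φ : E →ₗ[ℝ] ℝ) (hx : x ∈ convexHull ℝ s) (hs : ∀ y ∈ s, c ≤ φ y)
    (hφx : φ x = c) : x ∈ convexHull ℝ {y ∈ s | φ y = c} := by
  obtain ⟨ι, _, w, z, hw₀, hw₁, hz, rfl⟩ := mem_convexHull_iff_exists_fintype.1 hx
  have hslack : ∑ i, w i * (φ (z i) - c) = 0 := by
    simp only [mul_sub, Finset.sum_sub_distrib, ← Finset.sum_mul, hw₁, one_mul, ← hφx, map_sum,
      map_smul, smul_eq_mul, sub_self]
  have htight : ∀ i, w i ≠ 0 → φ (z i) = c := fun i hi => by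
    have := (Finset.sum_eq_zero_iff_of_nonneg fun j _ =>
      mul_nonneg (hw₀ j) (sub_nonneg.2 (hs _ (hz j)))).1 hslack i (Finset.mem_univ i)
    linarith [(mul_eq_zero.1 this).resolve_left hi]
  rw [← Finset.centerMass_eq_of_sum_1 _ _ hw₁, ← Finset.centerMass_filter_ne_zero]
  refine Finset.centerMass_mem_convexHull _ (fun i _ => hw₀ i) ?_ fun i hi => ?_
  · rw [Finset.sum_filter_ne_zero, hw₁]
    exact one_pos
  · exact ⟨hz i, htight i (Finset.mem_filter.1 hi).2⟩

theorem exists_mem_apply_ne_zero_of_mem_convexHull {ι : Type*} {s : Set (ι → ℝ)} {x : ι → ℝ}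
    {i : ι} (hx : x ∈ convexHull ℝ s) (hxi : x i ≠ 0) : ∃ y ∈ s, y i ≠ 0 := by
  by_contra! h
  exact hxi (convexHull_min h ((LinearMap.proj i).ker.convex) hx)

namespace PaperPM

section

variable {V : Type}

theorem edgeSum_indVec [DecidableEq V] (M A : Finset (Sym2 V)) :
    edgeSum (indVec M) A = #(M ∩ A) := by
  simp [edgeSum, indVec, Finset.inter_comm]

def edgeSumLinearMap (A : Finset (Sym2 V)) : (Sym2 V → ℝ) →ₗ[ℝ] ℝ where
  toFun x := edgeSum x A
  map_add' _ _ := Finset.sum_add_distrib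
  map_smul' _ _ := (Finset.mul_sum _ _ _).symm

@[simp]
theorem edgeSumLinearMap_apply (A : Finset (Sym2 V)) (x : Sym2 V → ℝ) :
    edgeSumLinearMap A x = edgeSum x A :=
  rfl

theorem IsPM.even_card_of_forall_mem [Fintype V] {G : SimpleGraph V} {M : Finset (Sym2 V)}
    (hM : IsPM G M) {X : Set V} [Fintype X] (hX : ∀ f ∈ M, ∀ a b, f = s(a, b) → a ∈ X → b ∈ X) :
    Even X.toFinset.card := by
  let H := (⊤ : (SimpleGraph.fromEdgeSet (M : Set (Sym2 V))).Subgraph).induce X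
  have hH : H.IsMatching := by
    intro v (hv : v ∈ X)
    obtain ⟨e, ⟨heM, hve⟩, huniq⟩ := hM.2 v
    obtain ⟨w, rfl⟩ := Sym2.mem_iff_exists.1 hve
    refine ⟨w, ⟨hv, hX _ heM v w rfl hv, heM, (hM.1 heM).ne⟩, ?_⟩
    rintro w' ⟨-, -, hw'M, -⟩
    exact Sym2.congr_right.1 (huniq _ ⟨hw'M, Sym2.mem_mk_left v w'⟩)
  convert hH.even_card
  rfl

variable [Fintype V] [DecidableEq V] {G : SimpleGraph V} {X Y : Set V} {M : Finset (Sym2 V)}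

theorem mem_cutE {e : Sym2 V} :
    e ∈ cutE G X ↔ e ∈ G.edgeSet ∧ ∃ u v : V, e = s(u, v) ∧ u ∈ X ∧ v ∉ X := by
  simp [cutE]

theorem mem_cutE_of_adj {u v : V} (huv : G.Adj u v) (hu : u ∈ X) (hv : v ∉ X) :
    s(u, v) ∈ cutE G X :=
  mem_cutE.2 ⟨huv, u, v, rfl, hu, hv⟩

theorem mk_notMem_cutE {u v : V} (hu : u ∉ X) (hv : v ∉ X) : s(u, v) ∉ cutE G X := by
  intro h
  obtain ⟨-, a, b, hab, ha, -⟩ := mem_cutE.1 h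
  rcases Sym2.mem_iff.1 (hab ▸ Sym2.mem_mk_left a b) with rfl | rfl <;> contradiction

theorem cutE_inter_subset : cutE G (X ∩ Y) ⊆ cutE G X ∪ cutE G Y := by
  intro e he
  obtain ⟨hG, a, b, rfl, ⟨haX, haY⟩, hb⟩ := mem_cutE.1 he
  rw [Finset.mem_union, mem_cutE, mem_cutE]
  by_cases hbX : b ∈ X
  · exact .inr ⟨hG, a, b, rfl, haY, fun hbY => hb ⟨hbX, hbY⟩⟩
  · exact .inl ⟨hG, a, b, rfl, haX, hbX⟩

theorem IsPM.exists_mem_cutE_of_odd [Fintype X] (hM : IsPM G M) (hX : Odd X.toFinset.card) :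
    ∃ f ∈ M, f ∈ cutE G X := by
  by_contra! h
  refine Nat.not_even_iff_odd.2 hX (hM.even_card_of_forall_mem fun f hf a b hfab ha => ?_)
  by_contra hb
  exact h f hf (mem_cutE.2 ⟨hM.1 hf, a, b, hfab, ha, hb⟩)

theorem one_le_edgeSum_cutE_of_isPM [Fintype X] {x : Sym2 V → ℝ}
    (hx : ∃ M, IsPM G M ∧ x = indVec M) (hX : Odd X.toFinset.card) : 1 ≤ edgeSum x (cutE G X) := by
  obtain ⟨M, hM, rfl⟩ := hx
  obtain ⟨f, hfM, hfX⟩ := hM.exists_mem_cutE_of_odd hX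
  rw [edgeSum_indVec, Nat.one_le_cast, Nat.one_le_iff_ne_zero, Finset.card_ne_zero]
  exact ⟨f, Finset.mem_inter.2 ⟨hfM, hfX⟩⟩

end

variable {V : Type} [Fintype V] [DecidableEq V]

theorem stmt6_general (G : SimpleGraph V) (X₁ X₂ : Set V)
    (hs1 : SeparatingCut G X₁) (hs2 : SeparatingCut G X₂)
    (hodd : Odd (X₁ ∩ X₂).toFinset.card)
    (hface : ∀ e ∈ G.edgeSet, ∃ x, x ∈ faceCut G X₁ ∧ x ∈ faceCut G X₂ ∧ x e ≠ 0) :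
    ∀ u ∈ X₁ \ X₂, ∀ v ∈ X₂ \ X₁, ¬ G.Adj u v := by
  rintro u ⟨hu₁, hu₂⟩ v ⟨hv₂, hv₁⟩ huv
  obtain ⟨x, ⟨hxP, hx₁⟩, ⟨-, hx₂⟩, hxe⟩ := hface s(u, v) huv
  have hx : x ∈ convexHull ℝ {y ∈ {y ∈ {y | ∃ M, IsPM G M ∧ y = indVec M} |
      edgeSumLinearMap (cutE G X₁) y = 1} | edgeSumLinearMap (cutE G X₂) y = 1} :=
    mem_convexHull_setOf_apply_eq _
      (mem_convexHull_setOf_apply_eq _ hxP (fun y hy => one_le_edgeSum_cutE_of_isPM hy hs1.1) hx₁)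
      (fun y hy => one_le_edgeSum_cutE_of_isPM hy.1 hs2.1) hx₂
  obtain ⟨-, ⟨⟨⟨M, hM, rfl⟩, hM₁⟩, hM₂⟩, heM⟩ := exists_mem_apply_ne_zero_of_mem_convexHull hx hxe
  replace heM : s(u, v) ∈ M := by
    by_contra h
    simp [indVec, h] at heM
  simp only [edgeSumLinearMap_apply, edgeSum_indVec, Nat.cast_eq_one] at hM₁ hM₂
  obtain ⟨f, hfM, hf⟩ := hM.exists_mem_cutE_of_odd hodd
  have hfe : f = s(u, v) := by
    rcases Finset.mem_union.1 (cutE_inter_subset hf) with hf₁ | hf₂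
    · exact Finset.card_le_one.1 hM₁.le _ (Finset.mem_inter.2 ⟨hfM, hf₁⟩) _
        (Finset.mem_inter.2 ⟨heM, mem_cutE_of_adj huv hu₁ hv₁⟩)
    · exact Finset.card_le_one.1 hM₂.le _ (Finset.mem_inter.2 ⟨hfM, hf₂⟩) _
        (Finset.mem_inter.2 ⟨heM, Sym2.eq_swap ▸ mem_cutE_of_adj huv.symm hv₂ hu₂⟩)
  exact mk_notMem_cutE (fun h => hu₂ h.2) (fun h => hv₁ h.1) (hfe ▸ hf)

/-- if `C₁ = δ(X₁)`, `C₂ = δ(X₂)` are separating cuts of a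
matching-covered graph `G`, `X₁, X₂` cross, `|X₁∩X₂|` is odd, and the face
`P(G;C₁) ∩ P(G;C₂)` lies in no hyperplane `{x : x_e = 0}`, then no edge of `G`
joins `X₁∖X₂` to `X₂∖X₁`. -/
theorem stmt6 (G : SimpleGraph V) (hG : MatchingCovered G) (X₁ X₂ : Set V)
    (hs1 : SeparatingCut G X₁) (hs2 : SeparatingCut G X₂)
    (h1 : (X₁ ∩ X₂).Nonempty) (h2 : (X₁ \ X₂).Nonempty) (h3 : (X₂ \ X₁).Nonempty)
    (h4 : ((X₁ ∪ X₂)ᶜ : Set V).Nonempty)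
    (hodd : Odd (X₁ ∩ X₂).toFinset.card)
    (hface : ∀ e ∈ G.edgeSet, ∃ x, x ∈ faceCut G X₁ ∧ x ∈ faceCut G X₂ ∧ x e ≠ 0) :
    ∀ u ∈ X₁ \ X₂, ∀ v ∈ X₂ \ X₁, ¬ G.Adj u v :=
  stmt6_general G X₁ X₂ hs1 hs2 hodd hface

end PaperPM
end
end
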